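/- For k ≥ 1 and α ≥ 1: U^k(ℤ_{2^α}) is a boolean ring (i.e., an elementary abelian 2-group) if and only if α = 2k or α = 2k+1, and U^k(ℤ_{2^α}) is trivial if and only if α < 2k. -/

import Mathlib

/-- Cyclic factors of the group of units of `ZMod (p^a)` (Lemma int1). -/
noncomputable def pUnitsList (p a : ℕ) : List ℕ :=
  if p = 2 then (if 2 ≤ a then [2, 2 ^ (a - 2)] else [1]) else [p - 1, p ^ (a - 1)]

/-- Cyclic factors of `U(ZMod n)`, via the prime-power factorization of `n`. -/
noncomputable def unitsList (n : ℕ) : List ℕ :=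
  (Nat.factorization n).support.toList.flatMap fun p => pUnitsList p (Nat.factorization n p)

/-- One application of the units functor to a product of cyclic rings. -/
noncomputable def uStep (l : List ℕ) : List ℕ := l.flatMap unitsList

/-- Cyclic factors of the k-th iterated group of units `U^k(ZMod n)`. -/
noncomputable def UkList (k n : ℕ) : List ℕ := uStep^[k] [n]

/-- The k-th iterated group of units `U^k(ZMod n)`, as the product of its cyclic factors. -/
abbrev Uk (k n : ℕ) : Type := ∀ i : Fin (UkList k n).length, ZMod ((UkList k n).get i)


/-!
For `b ≥ 2` the units of `ℤ/2^b` are `ℤ/2 × ℤ/2^(b-2)`, while `U(ℤ/2) = ℤ/1` and `U(ℤ/1)` is empty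
as a product. So each application of `U` turns the factor `ℤ/2^b` into `ℤ/2 × ℤ/2^(b-2)` and the
old factor `ℤ/2` into `ℤ/1`. After `k ≥ 1` steps, `U^k(ℤ/2^α)` is therefore `ℤ/2 × ℤ/2^(α-2k)`
(up to trivial factors) as long as `2k ≤ α`, and becomes trivial as soon as the exponent drops
below `2`. A product of cyclic groups is elementary abelian exactly when every order divides `2`.
-/

lemma unitsList_one : unitsList 1 = [] := by simp [unitsList]

lemma unitsList_two_pow {b : ℕ} (hb : b ≠ 0) : unitsList (2 ^ b) = pUnitsList 2 b := by
  simp [unitsList, Nat.prime_two.factorization_pow, Finsupp.support_single _ hb]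

lemma unitsList_two : unitsList 2 = [1] := by
  simpa [pUnitsList] using unitsList_two_pow one_ne_zero

lemma unitsList_two_pow_of_two_le {b : ℕ} (hb : 2 ≤ b) : unitsList (2 ^ b) = [2, 2 ^ (b - 2)] := by
  simp [unitsList_two_pow (by omega : b ≠ 0), pUnitsList, hb]

lemma eq_one_of_mem_unitsList_of_dvd_two {n x : ℕ} (hn : n ∣ 2) (hx : x ∈ unitsList n) : x = 1 := by
  rcases (Nat.dvd_prime Nat.prime_two).1 hn with rfl | rfl
  · simp [unitsList_one] at hx
  · simpa [unitsList_two] using hx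

lemma uStep_append (l l' : List ℕ) : uStep (l ++ l') = uStep l ++ uStep l' := List.flatMap_append

lemma uStep_eq_nil {l : List ℕ} (hl : ∀ x ∈ l, x = 1) : uStep l = [] := by
  simp only [uStep, List.flatMap_eq_nil_iff]
  intro x hx
  rw [hl x hx, unitsList_one]

lemma uStep_iterate_succ_forall_eq_one {l : List ℕ} (hl : ∀ n ∈ l, n ∣ 2) (j : ℕ) :
    ∀ x ∈ uStep^[j + 1] l, x = 1 := by
  induction j with
  | zero =>
    simp only [zero_add, Function.iterate_one, uStep, List.mem_flatMap]
    rintro x ⟨n, hn, hx⟩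
    exact eq_one_of_mem_unitsList_of_dvd_two (hl n hn) hx
  | succ j ih =>
    rw [Function.iterate_succ_apply', uStep_eq_nil ih]
    simp

lemma UkList_succ_two_pow {j b : ℕ} (h : 2 * (j + 1) ≤ b) :
    ∃ l, (∀ x ∈ l, x = 1) ∧ UkList (j + 1) (2 ^ b) = l ++ [2, 2 ^ (b - 2 * (j + 1))] := by
  induction j with
  | zero =>
    exact ⟨[], by simp, by simp [UkList, uStep, unitsList_two_pow_of_two_le (by omega : 2 ≤ b)]⟩
  | succ j ih =>
    obtain ⟨l, hl, hL⟩ := ih (by omega)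
    refine ⟨[1], by simp, ?_⟩
    have hb : b - 2 * (j + 1 + 1) = b - 2 * (j + 1) - 2 := by omega
    rw [UkList, Function.iterate_succ_apply', ← UkList, hL, hb, uStep_append, uStep_eq_nil hl,
      List.nil_append]
    simp [uStep, unitsList_two, unitsList_two_pow_of_two_le (by omega : 2 ≤ b - 2 * (j + 1))]

lemma UkList_half_two_pow_dvd_two (b : ℕ) : ∀ n ∈ UkList (b / 2) (2 ^ b), n ∣ 2 := by
  obtain hb | hb := lt_or_ge b 2
  · interval_cases b <;> simp [UkList]
  obtain ⟨j, hj⟩ : ∃ j, b / 2 = j + 1 := ⟨b / 2 - 1, by omega⟩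
  obtain ⟨l, hl, hL⟩ := UkList_succ_two_pow (by omega : 2 * (j + 1) ≤ b)
  have hr : 2 ^ (b - 2 * (j + 1)) ∣ 2 ^ 1 := pow_dvd_pow 2 (by omega)
  rw [hj, hL]
  simp only [List.mem_append, List.mem_cons, List.not_mem_nil, or_false]
  rintro n (hn | rfl | rfl)
  · simp [hl n hn]
  · exact dvd_rfl
  · simpa using hr

lemma UkList_two_pow_forall_eq_one {k α : ℕ} (h : α < 2 * k) : ∀ x ∈ UkList k (2 ^ α), x = 1 := by
  obtain ⟨j, rfl⟩ : ∃ j, k = j + 1 + α / 2 := ⟨k - 1 - α / 2, by omega⟩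
  rw [UkList, Function.iterate_add_apply]
  exact uStep_iterate_succ_forall_eq_one (UkList_half_two_pow_dvd_two α) j

lemma ZMod.forall_add_self_eq_zero_iff (n : ℕ) : (∀ y : ZMod n, y + y = 0) ↔ n ∣ 2 := by
  rw [← ZMod.natCast_eq_zero_iff]
  refine ⟨fun h => by simpa [one_add_one_eq_two] using h 1, fun h y => ?_⟩
  rw [← two_mul, ← Nat.cast_two, h, zero_mul]

section PiZMod

variable (L : List ℕ)

lemma subsingleton_pi_zmod (hL : ∀ n ∈ L, n = 1) :
    Subsingleton (∀ i : Fin L.length, ZMod (L.get i)) :=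
  have := fun i => ZMod.subsingleton_iff.2 (hL _ (L.get_mem i))
  inferInstance

lemma nontrivial_pi_zmod {n : ℕ} (hn : n ∈ L) (hn1 : n ≠ 1) :
    Nontrivial (∀ i : Fin L.length, ZMod (L.get i)) := by
  obtain ⟨i, rfl⟩ := List.mem_iff_get.1 hn
  have := ZMod.nontrivial_iff.2 hn1
  exact Pi.nontrivial_at i

lemma pi_zmod_forall_add_self_eq_zero_iff :
    (∀ x : ∀ i : Fin L.length, ZMod (L.get i), x + x = 0) ↔ ∀ n ∈ L, n ∣ 2 := by
  simp only [List.forall_mem_iff_get, ← ZMod.forall_add_self_eq_zero_iff]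
  refine ⟨fun h i y => by simpa using congrFun (h (Pi.single i y)) i, fun h x => ?_⟩
  exact funext fun i => h i (x i)

end PiZMod

theorem stmt_13_general (k α : ℕ) (hk : 1 ≤ k) :
    ((Nontrivial (Uk k (2 ^ α)) ∧ ∀ x : Uk k (2 ^ α), x + x = 0) ↔
      (α = 2 * k ∨ α = 2 * k + 1)) ∧
    (Subsingleton (Uk k (2 ^ α)) ↔ α < 2 * k) := by
  obtain hlt | hge := lt_or_ge α (2 * k)
  · have := subsingleton_pi_zmod _ (UkList_two_pow_forall_eq_one hlt)
    exact ⟨iff_of_false (fun h => not_nontrivial _ h.1) (by omega), iff_of_true this hlt⟩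
  obtain ⟨j, rfl⟩ : ∃ j, k = j + 1 := ⟨k - 1, by omega⟩
  obtain ⟨l, hl, hL⟩ := UkList_succ_two_pow hge
  have hnt : Nontrivial (Uk (j + 1) (2 ^ α)) :=
    nontrivial_pi_zmod _ (n := 2) (by simp [hL]) (by norm_num)
  have hbool : (∀ x : Uk (j + 1) (2 ^ α), x + x = 0) ↔ α - 2 * (j + 1) ≤ 1 := by
    have hl2 : ∀ n ∈ l, n ∣ 2 := fun n hn => hl n hn ▸ one_dvd 2
    rw [pi_zmod_forall_add_self_eq_zero_iff, hL, List.forall_mem_append, and_iff_right hl2,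
      ← Nat.pow_dvd_pow_iff_le_right one_lt_two]
    simp
  refine ⟨?_, iff_of_false (not_subsingleton _) (by omega)⟩
  rw [and_iff_right hnt, hbool]
  omega

theorem stmt_13 (k α : ℕ) (hk : 1 ≤ k) (hα : 1 ≤ α) :
    ((Nontrivial (Uk k (2 ^ α)) ∧ ∀ x : Uk k (2 ^ α), x + x = 0) ↔
      (α = 2 * k ∨ α = 2 * k + 1)) ∧
    (Subsingleton (Uk k (2 ^ α)) ↔ α < 2 * k) :=
  stmt_13_general k α hk
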